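/- If a_e ≤ a_l (the ego vehicle's braking capacity does not exceed the lead vehicle's), then the minimum safety distance reduces to the endpoint enumeration: sup_{ε ≥ 0} J(ε) = max(0, v_e·φ + v_e²/(2a_e) − v_l²/(2a_l)). -/

import Mathlib

/-!
While the lead vehicle is still moving, the speed gap `vE - vL` can only grow, because the ego
vehicle brakes no harder (`a_e ≤ a_l`). Hence if the gap is negative at `ε` it is negative on all
of `[0, ε]` and `J ε ≤ 0`; if it is nonnegative at `ε` it stays so afterwards, and `J ε` is at most
`J T` for any `T` past both stopping times, which is the difference of the two stopping distances
`v_e φ + v_e² / (2 a_e)` and `v_l² / (2 a_l)`.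
-/

open intervalIntegral

def brakingSpeed (v a t : ℝ) : ℝ := max (v - a * t) 0

noncomputable def delayedBrakingSpeed (v a φ t : ℝ) : ℝ :=
  if t < φ then v else brakingSpeed v a (t - φ)

noncomputable def netApproach (ve ae φ vl al ε : ℝ) : ℝ :=
  ∫ τ in (0:ℝ)..ε, (delayedBrakingSpeed ve ae φ τ - brakingSpeed vl al τ)

section BrakingSpeed

variable {v a s t : ℝ}

lemma brakingSpeed_nonneg : 0 ≤ brakingSpeed v a t := le_max_right _ _

lemma continuous_brakingSpeed : Continuous (brakingSpeed v a) := by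
  unfold brakingSpeed
  fun_prop

lemma brakingSpeed_of_mul_le (h : a * t ≤ v) : brakingSpeed v a t = v - a * t :=
  max_eq_left (sub_nonneg.2 h)

lemma brakingSpeed_of_le_mul (h : v ≤ a * t) : brakingSpeed v a t = 0 :=
  max_eq_right (sub_nonpos.2 h)

lemma brakingSpeed_le_add (ha : 0 ≤ a) (hst : s ≤ t) :
    brakingSpeed v a s ≤ brakingSpeed v a t + a * (t - s) := by
  have hdrop : 0 ≤ a * (t - s) := mul_nonneg ha (sub_nonneg.2 hst)
  have hmax : v - a * t ≤ brakingSpeed v a t := le_max_left _ _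
  exact max_le (by linarith) (by linarith [brakingSpeed_nonneg (v := v) (a := a) (t := t)])

lemma brakingSpeed_eq_add_of_pos (ha : 0 ≤ a) (hst : s ≤ t) (h : 0 < brakingSpeed v a t) :
    brakingSpeed v a s = brakingSpeed v a t + a * (t - s) := by
  have hmoving : a * t < v := by
    by_contra! hstop
    exact h.ne' (brakingSpeed_of_le_mul hstop)
  have hs : a * s ≤ a * t := mul_le_mul_of_nonneg_left hst ha
  rw [brakingSpeed_of_mul_le (by linarith), brakingSpeed_of_mul_le hmoving.le]
  ring

lemma integral_brakingSpeed (hv : 0 ≤ v) (ha : 0 < a) {T : ℝ} (hT : v / a ≤ T) :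
    ∫ t in (0:ℝ)..T, brakingSpeed v a t = v ^ 2 / (2 * a) := by
  have hstop : 0 ≤ v / a := div_nonneg hv ha.le
  have hint := continuous_brakingSpeed (v := v) (a := a)
  rw [← integral_add_adjacent_intervals (hint.intervalIntegrable 0 (v / a))
    (hint.intervalIntegrable (v / a) T)]
  have hmoving : ∫ t in (0:ℝ)..v / a, brakingSpeed v a t = ∫ t in (0:ℝ)..v / a, (v - a * t) := by
    refine integral_congr fun t ht => brakingSpeed_of_mul_le ?_
    rw [Set.uIcc_of_le hstop] at ht
    exact (le_div_iff₀' ha).1 ht.2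
  have hstopped : ∫ t in v / a..T, brakingSpeed v a t = ∫ _ in v / a..T, (0:ℝ) := by
    refine integral_congr fun t ht => brakingSpeed_of_le_mul ?_
    rw [Set.uIcc_of_le hT] at ht
    exact (div_le_iff₀' ha).1 ht.1
  rw [hmoving, hstopped, integral_sub intervalIntegrable_const
    ((continuous_const_mul a).intervalIntegrable _ _), integral_const_mul]
  simp only [integral_const, integral_id, integral_zero, smul_eq_mul]
  field_simp
  ring

end BrakingSpeed

section DelayedBrakingSpeed

variable {v a φ s t : ℝ}

lemma delayedBrakingSpeed_eq_brakingSpeed_max (hv : 0 ≤ v) :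
    delayedBrakingSpeed v a φ t = brakingSpeed v a (max (t - φ) 0) := by
  unfold delayedBrakingSpeed
  split_ifs with h
  · rw [max_eq_right (by linarith), brakingSpeed_of_mul_le (by simpa using hv)]
    ring
  · rw [max_eq_left (by linarith)]

lemma delayedBrakingSpeed_nonneg (hv : 0 ≤ v) : 0 ≤ delayedBrakingSpeed v a φ t := by
  rw [delayedBrakingSpeed_eq_brakingSpeed_max hv]
  exact brakingSpeed_nonneg

lemma continuous_delayedBrakingSpeed (hv : 0 ≤ v) : Continuous (delayedBrakingSpeed v a φ) := by
  have h : delayedBrakingSpeed v a φ = fun t => brakingSpeed v a (max (t - φ) 0) :=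
    funext fun _ => delayedBrakingSpeed_eq_brakingSpeed_max hv
  rw [h]
  exact continuous_brakingSpeed.comp (by fun_prop)

lemma delayedBrakingSpeed_le_add (hv : 0 ≤ v) (ha : 0 ≤ a) (hst : s ≤ t) :
    delayedBrakingSpeed v a φ s ≤ delayedBrakingSpeed v a φ t + a * (t - s) := by
  simp only [delayedBrakingSpeed_eq_brakingSpeed_max hv]
  have hmono : max (s - φ) 0 ≤ max (t - φ) 0 := by gcongr
  have hlip : max (t - φ) 0 - max (s - φ) 0 ≤ t - s := by
    simpa [max_eq_left (sub_nonneg.2 hst)] using max_sub_max_le_max (t - φ) 0 (s - φ) 0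
  calc brakingSpeed v a (max (s - φ) 0)
      ≤ brakingSpeed v a (max (t - φ) 0) + a * (max (t - φ) 0 - max (s - φ) 0) :=
        brakingSpeed_le_add ha hmono
    _ ≤ brakingSpeed v a (max (t - φ) 0) + a * (t - s) := by gcongr

lemma integral_delayedBrakingSpeed (hv : 0 ≤ v) (ha : 0 < a) (hφ : 0 ≤ φ) {T : ℝ}
    (hT : φ + v / a ≤ T) :
    ∫ t in (0:ℝ)..T, delayedBrakingSpeed v a φ t = v * φ + v ^ 2 / (2 * a) := by
  have hφT : φ ≤ T := by linarith [div_nonneg hv ha.le]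
  have hint := continuous_delayedBrakingSpeed (a := a) (φ := φ) hv
  rw [← integral_add_adjacent_intervals (hint.intervalIntegrable 0 φ)
    (hint.intervalIntegrable φ T)]
  have hreact : ∫ t in (0:ℝ)..φ, delayedBrakingSpeed v a φ t = ∫ _ in (0:ℝ)..φ, v := by
    refine integral_congr fun t ht => ?_
    rw [Set.uIcc_of_le hφ] at ht
    rw [delayedBrakingSpeed_eq_brakingSpeed_max hv, max_eq_right (by linarith [ht.2]),
      brakingSpeed_of_mul_le (by simpa using hv), mul_zero, sub_zero]
  have hbrake :
      ∫ t in φ..T, delayedBrakingSpeed v a φ t = ∫ t in φ..T, brakingSpeed v a (t - φ) := by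
    refine integral_congr fun t ht => ?_
    rw [Set.uIcc_of_le hφT] at ht
    rw [delayedBrakingSpeed_eq_brakingSpeed_max hv, max_eq_left (by linarith [ht.1])]
  rw [hreact, hbrake, integral_comp_sub_right (brakingSpeed v a), sub_self,
    integral_brakingSpeed hv ha (by linarith), integral_const, smul_eq_mul]
  ring

end DelayedBrakingSpeed

section NetApproach

variable {ve ae φ vl al : ℝ}

lemma continuous_speedGap (hve : 0 ≤ ve) :
    Continuous fun τ => delayedBrakingSpeed ve ae φ τ - brakingSpeed vl al τ :=
  (continuous_delayedBrakingSpeed hve).sub continuous_brakingSpeed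

lemma speedGap_le_of_neg (hve : 0 ≤ ve) (hae : 0 ≤ ae) (hle : ae ≤ al) {τ ε : ℝ} (hτ : τ ≤ ε)
    (hneg : delayedBrakingSpeed ve ae φ ε - brakingSpeed vl al ε < 0) :
    delayedBrakingSpeed ve ae φ τ - brakingSpeed vl al τ ≤
      delayedBrakingSpeed ve ae φ ε - brakingSpeed vl al ε := by
  have hlead : 0 < brakingSpeed vl al ε := by
    linarith [delayedBrakingSpeed_nonneg (a := ae) (φ := φ) (t := ε) hve]
  have hL := brakingSpeed_eq_add_of_pos (hae.trans hle) hτ hlead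
  have hE := delayedBrakingSpeed_le_add (φ := φ) hve hae hτ
  linarith [mul_le_mul_of_nonneg_right hle (sub_nonneg.2 hτ)]

lemma netApproach_nonpos (hve : 0 ≤ ve) (hae : 0 ≤ ae) (hle : ae ≤ al) {ε : ℝ} (hε : 0 ≤ ε)
    (hneg : delayedBrakingSpeed ve ae φ ε - brakingSpeed vl al ε < 0) :
    netApproach ve ae φ vl al ε ≤ 0 := by
  have hint := continuous_speedGap (ae := ae) (φ := φ) (vl := vl) (al := al) hve
  calc netApproach ve ae φ vl al ε ≤ ∫ _ in (0:ℝ)..ε, (0:ℝ) :=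
        integral_mono_on hε (hint.intervalIntegrable 0 ε) intervalIntegrable_const fun τ hτ =>
          (speedGap_le_of_neg hve hae hle hτ.2 hneg).trans hneg.le
    _ = 0 := integral_zero

lemma netApproach_le_of_nonneg (hve : 0 ≤ ve) (hae : 0 ≤ ae) (hle : ae ≤ al) {ε T : ℝ}
    (hεT : ε ≤ T) (hnonneg : 0 ≤ delayedBrakingSpeed ve ae φ ε - brakingSpeed vl al ε) :
    netApproach ve ae φ vl al ε ≤ netApproach ve ae φ vl al T := by
  have hint := continuous_speedGap (ae := ae) (φ := φ) (vl := vl) (al := al) hve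
  unfold netApproach
  rw [← integral_add_adjacent_intervals (hint.intervalIntegrable 0 ε)
    (hint.intervalIntegrable ε T), le_add_iff_nonneg_right]
  refine integral_nonneg hεT fun τ hτ => ?_
  by_contra! hneg
  linarith [speedGap_le_of_neg hve hae hle hτ.1 hneg]

lemma netApproach_of_stopped (hve : 0 ≤ ve) (hae : 0 < ae) (hφ : 0 ≤ φ) (hvl : 0 ≤ vl)
    (hal : 0 < al) {T : ℝ} (hTe : φ + ve / ae ≤ T) (hTl : vl / al ≤ T) :
    netApproach ve ae φ vl al T = ve * φ + ve ^ 2 / (2 * ae) - vl ^ 2 / (2 * al) := by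
  unfold netApproach
  rw [integral_sub ((continuous_delayedBrakingSpeed hve).intervalIntegrable 0 T)
    (continuous_brakingSpeed.intervalIntegrable 0 T), integral_delayedBrakingSpeed hve hae hφ hTe,
    integral_brakingSpeed hvl hal hTl]

lemma netApproach_le_max (hve : 0 ≤ ve) (hae : 0 < ae) (hφ : 0 ≤ φ) (hvl : 0 ≤ vl)
    (hal : 0 < al) (hle : ae ≤ al) {ε : ℝ} (hε : 0 ≤ ε) :
    netApproach ve ae φ vl al ε ≤ max 0 (ve * φ + ve ^ 2 / (2 * ae) - vl ^ 2 / (2 * al)) := by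
  rcases lt_or_ge (delayedBrakingSpeed ve ae φ ε - brakingSpeed vl al ε) 0 with hneg | hnonneg
  · exact (netApproach_nonpos hve hae.le hle hε hneg).trans (le_max_left _ _)
  · set T := max ε (max (φ + ve / ae) (vl / al))
    calc netApproach ve ae φ vl al ε ≤ netApproach ve ae φ vl al T :=
          netApproach_le_of_nonneg hve hae.le hle (le_max_left _ _) hnonneg
      _ = ve * φ + ve ^ 2 / (2 * ae) - vl ^ 2 / (2 * al) :=
          netApproach_of_stopped hve hae hφ hvl hal (by simp [T]) (by simp [T])
      _ ≤ _ := le_max_right _ _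

end NetApproach

/-- If `a_e ≤ a_l`, the minimum safety distance reduces to the endpoint
enumeration: `sup_{ε ≥ 0} J(ε) = max(0, v_e·φ + v_e²/(2a_e) − v_l²/(2a_l))`. -/
theorem min_safety_distance_endpoint_case
    (vl ve al ae φ : ℝ)
    (hvl : 0 ≤ vl) (hve : 0 ≤ ve) (hal : 0 < al) (hae : 0 < ae) (hφ : 0 ≤ φ)
    (vL vE J : ℝ → ℝ)
    (hvL : ∀ τ, vL τ = max (vl - al * τ) 0)
    (hvE : ∀ τ, vE τ = if τ < φ then ve else max (ve - ae * (τ - φ)) 0)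
    (hJ : ∀ ε, J ε = ∫ τ in (0:ℝ)..ε, (vE τ - vL τ))
    (hle : ae ≤ al) :
    IsLUB (J '' {ε : ℝ | 0 ≤ ε})
      (max 0 (ve * φ + ve ^ 2 / (2 * ae) - vl ^ 2 / (2 * al))) := by
  have hJ' : J = netApproach ve ae φ vl al := by
    obtain rfl : vL = brakingSpeed vl al := funext hvL
    obtain rfl : vE = delayedBrakingSpeed ve ae φ := funext hvE
    exact funext hJ
  subst hJ'
  refine IsGreatest.isLUB ⟨?_, ?_⟩
  · rcases max_choice 0 (ve * φ + ve ^ 2 / (2 * ae) - vl ^ 2 / (2 * al)) with h | h <;> rw [h]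
    · exact ⟨0, le_refl (0:ℝ), integral_same⟩
    · have hT : 0 ≤ max (φ + ve / ae) (vl / al) := by positivity
      exact ⟨_, hT, netApproach_of_stopped hve hae hφ hvl hal (le_max_left _ _) (le_max_right _ _)⟩
  · rintro _ ⟨ε, hε, rfl⟩
    exact netApproach_le_max hve hae hφ hvl hal hle hε
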